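/- Let n ≥ 1, let U ⊆ ℝ^{n+1} be open, and let ρ, f : U → ℝ be smooth with f > 0 on U. Then there exists a smooth function g : U → ℝ such that J[f·ρ] = f^{n+2} · J[ρ] + g·ρ on U. -/

import Mathlib

open MeasureTheory Topology

noncomputable def pd {m : ℕ} (f : (Fin m → ℝ) → ℝ) (i : Fin m) (x : Fin m → ℝ) : ℝ :=
  fderiv ℝ f x (Pi.single i 1)

noncomputable def hess {m : ℕ} (f : (Fin m → ℝ) → ℝ) (x : Fin m → ℝ) :
    Matrix (Fin m) (Fin m) ℝ :=
  Matrix.of fun i j => pd (pd f j) i x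

noncomputable def Jop {n : ℕ} (ρ : (Fin (n + 1) → ℝ) → ℝ) (x : Fin (n + 1) → ℝ) : ℝ :=
  (Matrix.of (fun I J : Fin (n + 2) =>
    Fin.cases (Fin.cases (2 * ρ x) (fun j => pd ρ j x) J)
      (fun i => Fin.cases (pd ρ i x) (fun j => hess ρ x i j) J) I)).det

structure IsDefiningFn (n : ℕ) (Ω V : Set (Fin (n + 1) → ℝ)) (ρ : (Fin (n + 1) → ℝ) → ℝ) : Prop where
  openV : IsOpen V
  frontier_sub : frontier Ω ⊆ V
  smooth : ContDiffOn ℝ (⊤ : ℕ∞) ρ V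
  neg_iff : ∀ x ∈ V, (x ∈ Ω ↔ ρ x < 0)
  zero_bdry : ∀ x ∈ frontier Ω, ρ x = 0
  grad_ne : ∀ x ∈ frontier Ω, ∃ i, pd ρ i x ≠ 0

def StrictlyConvexWith (n : ℕ) (Ω : Set (Fin (n + 1) → ℝ)) (ρ : (Fin (n + 1) → ℝ) → ℝ) : Prop :=
  ∀ p ∈ frontier Ω, ∀ w : Fin (n + 1) → ℝ, w ≠ 0 →
    (∑ i, pd ρ i p * w i) = 0 → 0 < ∑ i, ∑ j, hess ρ p i j * w i * w j

structure IsBddStrictlyConvexDomain (n : ℕ) (Ω : Set (Fin (n + 1) → ℝ)) : Prop where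
  isOpen : IsOpen Ω
  nonempty : Ω.Nonempty
  bounded : Bornology.IsBounded Ω
  convexBdry : ∃ V ρ, IsDefiningFn n Ω V ρ ∧ StrictlyConvexWith n Ω ρ

/-! By the product rule, the bordered Hessian of `f ρ` is `Cᵀ (f · M(ρ) + ρ · T) C`, where `M(ρ)`
is the bordered Hessian of `ρ`, `T = [[0, -∇f], [-∇f, Hess f]]` and `C = 1 + e₀ ⊗ (0, ∇f / f)` is a
shear of determinant one. Expanding `det (f · M(ρ) + ρ · T)` multilinearly in the rows, the
term without `T` is `f ^ (n + 2) J[ρ]`, and every other term carries a factor `ρ` times a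
polynomial in the derivatives of `f` and `ρ`. -/

open Matrix

section Bordered

variable {R : Type*} [CommRing R] {m : ℕ}

def borderedMatrix (a : R) (v : Fin m → R) (H : Matrix (Fin m) (Fin m) R) :
    Matrix (Fin (m + 1)) (Fin (m + 1)) R :=
  of fun I J => Fin.cases (Fin.cases a v J) (fun i => Fin.cases (v i) (H i) J) I

def shearMatrix (w : Fin m → R) : Matrix (Fin (m + 1)) (Fin (m + 1)) R :=
  1 + vecMulVec (Pi.single 0 1) (Fin.cons 0 w)

theorem smul_borderedMatrix_add_smul_borderedMatrix (r s a b : R) (v u : Fin m → R)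
    (H K : Matrix (Fin m) (Fin m) R) :
    r • borderedMatrix a v H + s • borderedMatrix b u K
      = borderedMatrix (r * a + s * b) (r • v + s • u) (r • H + s • K) := by
  ext I J
  refine Fin.cases ?_ (fun i => ?_) I <;> refine Fin.cases ?_ (fun j => ?_) J <;>
    simp [borderedMatrix]

theorem det_shearMatrix (w : Fin m → R) : (shearMatrix w).det = 1 := by
  rw [shearMatrix, vecMulVec_eq Unit, det_one_add_replicateCol_mul_replicateRow,
    dotProduct_single]
  simp

theorem shearMatrix_transpose_mul_borderedMatrix_mul_shearMatrix (a : R) (v w : Fin m → R)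
    (H : Matrix (Fin m) (Fin m) R) :
    (shearMatrix w)ᵀ * borderedMatrix a v H * shearMatrix w
      = borderedMatrix a (v + a • w) (H + vecMulVec w v + vecMulVec v w + a • vecMulVec w w) := by
  rw [shearMatrix, transpose_add, transpose_one, transpose_vecMulVec]
  ext I J
  refine Fin.cases ?_ (fun i => ?_) I <;> refine Fin.cases ?_ (fun j => ?_) J <;>
    simp [borderedMatrix, add_mul, mul_add, Matrix.mul_apply, vecMulVec_apply, Fin.sum_univ_succ,
      Pi.single_apply, one_apply, (Fin.succ_ne_zero _).symm] <;> ring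

theorem det_add_smul_eq {ι : Type*} [Fintype ι] [DecidableEq ι] (A B : Matrix ι ι R) (t : R) :
    (A + t • B).det = A.det + t * ∑ s ∈ (Finset.univ : Finset (Finset ι)).erase ∅,
      t ^ (s.card - 1) * (of fun i => if i ∈ s then B i else A i).det := by
  have expand : (A + t • B).det
      = ∑ s : Finset ι, t ^ s.card * (of fun i => if i ∈ s then B i else A i).det := by
    rw [add_comm]
    change detRowAlternating ((fun i => t • B i) + fun i => A i) = _
    rw [AlternatingMap.map_add_univ]
    refine Finset.sum_congr rfl fun s _ => ?_
    have rows : s.piecewise (fun i => t • B i) (fun i => A i)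
        = fun i => (if i ∈ s then t else 1) • (if i ∈ s then B i else A i) := by
      ext i : 1
      by_cases hi : i ∈ s <;> simp [hi]
    rw [rows, AlternatingMap.map_smul_univ, Finset.prod_ite_mem, Finset.univ_inter,
      Finset.prod_const, smul_eq_mul]
    rfl
  rw [expand, ← Finset.add_sum_erase _ _ (Finset.mem_univ ∅), Finset.mul_sum]
  congr 1
  · simp only [Finset.card_empty, pow_zero, one_mul, Finset.notMem_empty, if_false]; rfl
  refine Finset.sum_congr rfl fun s hs => ?_
  rw [← mul_assoc, ← pow_succ', Nat.sub_add_cancel]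
  exact Finset.card_pos.mpr (Finset.nonempty_iff_ne_empty.mpr (Finset.ne_of_mem_erase hs))

end Bordered

open scoped ContDiff

section Calculus

variable {𝕜 E : Type*} [NontriviallyNormedField 𝕜] [NormedAddCommGroup E] [NormedSpace 𝕜 E]
  {U : Set E} {n : WithTop ℕ∞}

theorem contDiffOn_det {ι : Type*} [Fintype ι] [DecidableEq ι] {M : E → Matrix ι ι 𝕜}
    (hM : ∀ i j, ContDiffOn 𝕜 n (fun x => M x i j) U) :
    ContDiffOn 𝕜 n (fun x => (M x).det) U := by
  simp only [det_apply']
  exact ContDiffOn.sum fun σ _ => contDiffOn_const.mul (contDiffOn_prod fun i _ => hM (σ i) i)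

theorem exists_contDiffOn_det_add_smul {ι : Type*} [Fintype ι] [DecidableEq ι]
    {A B : E → Matrix ι ι 𝕜} {φ : E → 𝕜}
    (hA : ∀ i j, ContDiffOn 𝕜 n (fun x => A x i j) U)
    (hB : ∀ i j, ContDiffOn 𝕜 n (fun x => B x i j) U) (hφ : ContDiffOn 𝕜 n φ U) :
    ∃ g : E → 𝕜, ContDiffOn 𝕜 n g U ∧ ∀ x, (A x + φ x • B x).det = (A x).det + g x * φ x := by
  refine ⟨fun x => ∑ s ∈ (Finset.univ : Finset (Finset ι)).erase ∅,
    φ x ^ (s.card - 1) * (of fun i => if i ∈ s then B x i else A x i).det, ?_,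
    fun x => by rw [det_add_smul_eq, mul_comm (φ x)]⟩
  refine ContDiffOn.sum fun s _ => (hφ.pow _).mul (contDiffOn_det fun i j => ?_)
  by_cases hi : i ∈ s
  · simpa only [of_apply, hi, if_true] using hB i j
  · simpa only [of_apply, hi, if_false] using hA i j

theorem contDiffOn_borderedMatrix_apply {m : ℕ} {a : E → 𝕜} {v : E → Fin m → 𝕜}
    {H : E → Matrix (Fin m) (Fin m) 𝕜} (ha : ContDiffOn 𝕜 n a U)
    (hv : ∀ i, ContDiffOn 𝕜 n (fun x => v x i) U)
    (hH : ∀ i j, ContDiffOn 𝕜 n (fun x => H x i j) U) (I J : Fin (m + 1)) :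
    ContDiffOn 𝕜 n (fun x => borderedMatrix (a x) (v x) (H x) I J) U := by
  refine Fin.cases ?_ (fun i => ?_) I <;> refine Fin.cases ?_ (fun j => ?_) J
  exacts [ha, hv j, hv i, hH i j]

end Calculus

section PartialDerivatives

variable {m : ℕ}

theorem ContDiffOn.pd {U : Set (Fin m → ℝ)} (hU : IsOpen U) {f : (Fin m → ℝ) → ℝ}
    (hf : ContDiffOn ℝ ∞ f U) (i : Fin m) : ContDiffOn ℝ ∞ (pd f i) U :=
  (hf.fderiv_of_isOpen hU (by simp)).clm_apply contDiffOn_const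

theorem pd_mul {f ρ : (Fin m → ℝ) → ℝ} {x : Fin m → ℝ} (hf : DifferentiableAt ℝ f x)
    (hρ : DifferentiableAt ℝ ρ x) (j : Fin m) :
    pd (fun y => f y * ρ y) j x = f x * pd ρ j x + ρ x * pd f j x := by
  simp only [pd, fderiv_fun_mul hf hρ, _root_.add_apply, _root_.smul_apply, smul_eq_mul]

theorem differentiableAt_pd {f : (Fin m → ℝ) → ℝ} {x : Fin m → ℝ} (hf : ContDiffAt ℝ 2 f x)
    (j : Fin m) : DifferentiableAt ℝ (pd f j) x :=
  ((hf.fderiv_right (m := 1) le_rfl).clm_apply contDiffAt_const).differentiableAt one_ne_zero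

theorem hess_mul {f ρ : (Fin m → ℝ) → ℝ} {x : Fin m → ℝ} (hf : ContDiffAt ℝ 2 f x)
    (hρ : ContDiffAt ℝ 2 ρ x) (i j : Fin m) :
    hess (fun y => f y * ρ y) x i j
      = f x * hess ρ x i j + pd f i x * pd ρ j x + pd ρ i x * pd f j x + ρ x * hess f x i j := by
  have near : pd (fun y => f y * ρ y) j =ᶠ[𝓝 x] fun y => f y * pd ρ j y + ρ y * pd f j y := by
    filter_upwards [hf.eventually (by simp), hρ.eventually (by simp)] with y hfy hρy
    exact pd_mul (hfy.differentiableAt (by simp)) (hρy.differentiableAt (by simp)) j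
  have hfd := hf.differentiableAt (by simp)
  have hρd := hρ.differentiableAt (by simp)
  rw [hess, of_apply, pd, near.fderiv_eq,
    fderiv_fun_add (hfd.fun_mul (differentiableAt_pd hρ j)) (hρd.fun_mul (differentiableAt_pd hf j)),
    fderiv_fun_mul hfd (differentiableAt_pd hρ j), fderiv_fun_mul hρd (differentiableAt_pd hf j)]
  simp only [_root_.add_apply, _root_.smul_apply, smul_eq_mul, hess, of_apply, pd]
  ring

end PartialDerivatives

theorem Jop_eq_det_borderedMatrix {n : ℕ} (ρ : (Fin (n + 1) → ℝ) → ℝ) (x : Fin (n + 1) → ℝ) :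
    Jop ρ x = (borderedMatrix (2 * ρ x) (fun j => pd ρ j x) (hess ρ x)).det := rfl

theorem Jop_mul_eq_det {n : ℕ} {f ρ : (Fin (n + 1) → ℝ) → ℝ} {x : Fin (n + 1) → ℝ}
    (hf : ContDiffAt ℝ 2 f x) (hρ : ContDiffAt ℝ 2 ρ x) (hfx : f x ≠ 0) :
    Jop (fun y => f y * ρ y) x
      = (f x • borderedMatrix (2 * ρ x) (fun j => pd ρ j x) (hess ρ x)
          + ρ x • borderedMatrix 0 (-fun j => pd f j x) (hess f x)).det := by
  have congruence : (shearMatrix fun j => pd f j x / f x)ᵀ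
        * (f x • borderedMatrix (2 * ρ x) (fun j => pd ρ j x) (hess ρ x)
          + ρ x • borderedMatrix 0 (-fun j => pd f j x) (hess f x))
        * shearMatrix (fun j => pd f j x / f x)
      = borderedMatrix (2 * (f x * ρ x)) (fun j => pd (fun y => f y * ρ y) j x)
          (hess (fun y => f y * ρ y) x) := by
    rw [smul_borderedMatrix_add_smul_borderedMatrix,
      shearMatrix_transpose_mul_borderedMatrix_mul_shearMatrix]
    congr 1
    · ring
    · ext j
      simp only [Pi.add_apply, Pi.smul_apply, Pi.neg_apply, smul_eq_mul,
        pd_mul (hf.differentiableAt (by simp)) (hρ.differentiableAt (by simp))]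
      field_simp
      ring
    · ext i j
      simp only [Matrix.add_apply, Matrix.smul_apply, vecMulVec_apply, Pi.add_apply,
        Pi.smul_apply, Pi.neg_apply, smul_eq_mul, hess_mul hf hρ]
      field_simp
      ring
  rw [Jop_eq_det_borderedMatrix, ← congruence, det_mul, det_mul, det_transpose, det_shearMatrix,
    one_mul, mul_one]

theorem stmt3_general (n : ℕ) (U : Set (Fin (n + 1) → ℝ)) (hU : IsOpen U)
    (ρ f : (Fin (n + 1) → ℝ) → ℝ)
    (hρ : ContDiffOn ℝ (⊤ : ℕ∞) ρ U) (hf : ContDiffOn ℝ (⊤ : ℕ∞) f U)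
    (hfpos : ∀ x ∈ U, 0 < f x) :
    ∃ g : (Fin (n + 1) → ℝ) → ℝ, ContDiffOn ℝ (⊤ : ℕ∞) g U ∧
      ∀ x ∈ U, Jop (fun y => f y * ρ y) x = f x ^ (n + 2) * Jop ρ x + g x * ρ x := by
  have twice : ∀ {φ : (Fin (n + 1) → ℝ) → ℝ}, ContDiffOn ℝ ∞ φ U → ∀ x ∈ U, ContDiffAt ℝ 2 φ x :=
    fun hφ x hx => (hφ.contDiffAt (hU.mem_nhds hx)).of_le (WithTop.coe_le_coe.mpr le_top)
  obtain ⟨g, hg, hdet⟩ := exists_contDiffOn_det_add_smul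
    (A := fun x => f x • borderedMatrix (2 * ρ x) (fun j => pd ρ j x) (hess ρ x))
    (B := fun x => borderedMatrix 0 (-fun j => pd f j x) (hess f x))
    (fun I J => hf.mul (contDiffOn_borderedMatrix_apply (contDiffOn_const.mul hρ)
      (hρ.pd hU) (fun i j => (hρ.pd hU j).pd hU i) I J))
    (contDiffOn_borderedMatrix_apply contDiffOn_const (fun j => (hf.pd hU j).neg)
      (fun i j => (hf.pd hU j).pd hU i)) hρ
  refine ⟨g, hg, fun x hx => ?_⟩
  rw [Jop_mul_eq_det (twice hf x hx) (twice hρ x hx) (hfpos x hx).ne', hdet, det_smul,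
    Fintype.card_fin, Jop_eq_det_borderedMatrix]

/-- Variational lemma (i): `J[fρ] = f^(n+2) J[ρ] + O(ρ)`. -/
theorem stmt3 (n : ℕ) (hn : 1 ≤ n) (U : Set (Fin (n + 1) → ℝ)) (hU : IsOpen U)
    (ρ f : (Fin (n + 1) → ℝ) → ℝ)
    (hρ : ContDiffOn ℝ (⊤ : ℕ∞) ρ U) (hf : ContDiffOn ℝ (⊤ : ℕ∞) f U)
    (hfpos : ∀ x ∈ U, 0 < f x) :
    ∃ g : (Fin (n + 1) → ℝ) → ℝ, ContDiffOn ℝ (⊤ : ℕ∞) g U ∧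
      ∀ x ∈ U, Jop (fun y => f y * ρ y) x = f x ^ (n + 2) * Jop ρ x + g x * ρ x :=
  stmt3_general n U hU ρ f hρ hf hfpos
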